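/- arXiv:2604.07627 — 6 statements merged into one kernel-verified Lean document; each statement's English description precedes it below -/
import Mathlib

section
/- If the commutative ring R-algebra RB(G) (the Burnside algebra of a finite group G over a unital commutative ring R) is separable, i.e. admits a separability element u in RB(G)⊗_R RB(G) with α·u = u·α for all α and μ(u) = [G/G], then |G| is invertible in R. -/
open scoped TensorProduct

/-! The mark at the trivial subgroup, `φ [G/H] = |G : H|`, is a character of `RB(G)`, and
`e = [G/1]` satisfies `e * a = φ a • e` with `φ e = |G|`. Contracting a separability element `u`
along `φ` in the right factor gives `ψ u ∈ RB(G)` with `φ (ψ u) = φ (μ u) = 1`; applying this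
contraction to `(e ⊗ 1) u = u (1 ⊗ e)` yields `e = φ e • ψ u`, and the `e`-coordinate of this
identity reads `1 = |G| * c`. -/

section

variable {R A : Type*} [CommSemiring R] [Semiring A] [Algebra R A]

theorem map_mul_of_mul_eq_smul {e : A} {φ ℓ : A →ₗ[R] R} (hℓ : ℓ e = 1)
    (he : ∀ a, e * a = φ a • e) (a b : A) : φ (a * b) = φ a * φ b := by
  have hφ : ∀ x, φ x = ℓ (e * x) := fun x => by rw [he, map_smul, hℓ, smul_eq_mul, mul_one]
  rw [hφ, ← mul_assoc, he, smul_mul_assoc, he, smul_smul, map_smul, hℓ, smul_eq_mul, mul_one]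

theorem map_one_of_mul_eq_smul {e : A} {φ ℓ : A →ₗ[R] R} (hℓ : ℓ e = 1)
    (he : ∀ a, e * a = φ a • e) : φ 1 = 1 := by
  simpa [hℓ] using (congrArg ℓ (he 1)).symm

def AlgHom.ofMulEqSmul {e : A} {φ ℓ : A →ₗ[R] R} (hℓ : ℓ e = 1)
    (he : ∀ a, e * a = φ a • e) : A →ₐ[R] R :=
  AlgHom.ofLinearMap φ (map_one_of_mul_eq_smul hℓ he) (map_mul_of_mul_eq_smul hℓ he)

theorem isUnit_of_separable_of_mul_eq_smul {e : A} {φ : A →ₐ[R] R} {ℓ : A →ₗ[R] R}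
    (hℓ : ℓ e = 1) (he : ∀ a, e * a = φ a • e) (u : A ⊗[R] A)
    (hcomm : ∀ a : A, (a ⊗ₜ[R] (1 : A)) * u = u * ((1 : A) ⊗ₜ[R] a))
    (hmu : LinearMap.mul' R A u = 1) : IsUnit (φ e) := by
  let ψ : A ⊗[R] A →ₐ[R] A :=
    (Algebra.TensorProduct.rid R R A).toAlgHom.comp
      (Algebra.TensorProduct.map (AlgHom.id R A) φ)
  have hψ : ∀ a b : A, ψ (a ⊗ₜ b) = φ b • a := fun _ _ => rfl
  have hφψ : φ (ψ u) = 1 := by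
    have h : φ.toLinearMap ∘ₗ ψ.toLinearMap = φ.toLinearMap ∘ₗ LinearMap.mul' R A :=
      TensorProduct.ext' fun a b => by simp [hψ, mul_comm]
    simpa [hmu] using LinearMap.congr_fun h u
  have he_smul : e = φ e • ψ u := by
    have h := congrArg ψ (hcomm e)
    rwa [map_mul, map_mul, hψ, hψ, map_one, one_smul, he, hφψ, one_smul, mul_smul_comm,
      mul_one] at h
  refine IsUnit.of_mul_eq_one (ℓ (ψ u)) ?_
  rw [← smul_eq_mul, ← map_smul, ← he_smul, hℓ]

end

theorem Module.Basis.mul_eq_constr_smul {R A ι : Type*} [CommSemiring R] [Semiring A]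
    [Algebra R A] (ℬ : Module.Basis ι R A) {i0 : ι} {c : ι → R}
    (hmul : ∀ i, ℬ i0 * ℬ i = c i • ℬ i0) (a : A) : ℬ i0 * a = ℬ.constr R c a • ℬ i0 := by
  have h : LinearMap.mulLeft R (ℬ i0) = (ℬ.constr R c).smulRight (ℬ i0) :=
    ℬ.ext fun i => by simp [hmul i]
  simpa using LinearMap.congr_fun h a

theorem burnside_separable_imp_card_isUnit_general
    {R : Type} [CommRing R] {G : Type} [Group G] [Fintype G]
    {A : Type} [CommRing A] [Algebra R A]
    {ι : Type} (sG : ι → Subgroup G) (ℬ : Module.Basis ι R A)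
    (i0 : ι) (hi0 : sG i0 = ⊥)
    (hmul : ∀ i : ι, ℬ i0 * ℬ i = ((sG i).index : R) • ℬ i0)
    (u : A ⊗[R] A)
    (hcomm : ∀ a : A, (a ⊗ₜ[R] (1 : A)) * u = u * ((1 : A) ⊗ₜ[R] a))
    (hmu : LinearMap.mul' R A u = 1) :
    IsUnit ((Fintype.card G : R)) := by
  have hℓ : ℬ.coord i0 (ℬ i0) = 1 := by simp
  have he := ℬ.mul_eq_constr_smul hmul
  have h := isUnit_of_separable_of_mul_eq_smul hℓ (φ := AlgHom.ofMulEqSmul hℓ he) he u hcomm hmu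
  rwa [AlgHom.ofMulEqSmul, AlgHom.ofLinearMap_apply, ℬ.constr_basis, hi0, Subgroup.index_bot,
    Nat.card_eq_fintype_card] at h

/-- If the Burnside `R`-algebra `A = RB(G)` of a finite group `G` (axiomatized here by its
`R`-basis `ℬ` of classes `[G/H]`, `H` running over representatives `sG` of conjugacy classes of
subgroups, with `[G/G] = 1` and `[G/1]·[G/H] = |G:H|·[G/1]`) admits a separability element
`u ∈ A ⊗[R] A` (i.e. `a·u = u·a` for all `a` and `μ(u) = 1 = [G/G]`), then `|G|` is
invertible in `R`. -/
theorem burnside_separable_imp_card_isUnit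
    {R : Type} [CommRing R] {G : Type} [Group G] [Fintype G]
    {A : Type} [CommRing A] [Algebra R A]
    {ι : Type} [Fintype ι] (sG : ι → Subgroup G) (ℬ : Module.Basis ι R A)
    (i0 itop : ι) (hi0 : sG i0 = ⊥) (hitop : sG itop = ⊤)
    (hone : ℬ itop = 1)
    (hmul : ∀ i : ι, ℬ i0 * ℬ i = ((sG i).index : R) • ℬ i0)
    (u : A ⊗[R] A)
    (hcomm : ∀ a : A, (a ⊗ₜ[R] (1 : A)) * u = u * ((1 : A) ⊗ₜ[R] a))
    (hmu : LinearMap.mul' R A u = 1) :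
    IsUnit ((Fintype.card G : R)) :=
  burnside_separable_imp_card_isUnit_general sG ℬ i0 hi0 hmul u hcomm hmu
end

section
/- If |G| is invertible in R, then the element u = Σ_{H∈[s_G]} e_H^G ⊗ e_H^G of RB(G)⊗_R RB(G) is a separability element: α·u = u·α for all α ∈ RB(G), and μ(u) = [G/G]. Hence RB(G) is a separable R-algebra. -/
open scoped TensorProduct

/-- If `|G|` is invertible in `R`, then in the Burnside algebra `A = RB(G)` (axiomatized via its
family of orthogonal idempotents `e H = e_H^G`, `H ∈ [s_G]`, summing to `1 = [G/G]` and
satisfying `e_H · α = Φ_H(α) e_H` for the mark homomorphisms `Φ_H`), the element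
`u = Σ_H e_H ⊗ e_H` is a separability element: `a·u = u·a` for all `a ∈ A` and `μ(u) = 1`.
Hence `RB(G)` is a separable `R`-algebra. -/
theorem burnside_card_isUnit_imp_separability_element
    {R : Type} [CommRing R] {G : Type} [Group G] [Fintype G]
    {A : Type} [CommRing A] [Algebra R A]
    {ι : Type} [Fintype ι] (sG : ι → Subgroup G)
    (hG : IsUnit (Fintype.card G : R))
    (e : ι → A) (Φ : ι → (A →ₐ[R] R))
    (hchar : ∀ (i : ι) (a : A), e i * a = Φ i a • e i)
    (hidem : ∀ i : ι, e i * e i = e i)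
    (horth : ∀ i j : ι, i ≠ j → e i * e j = 0)
    (hsum : ∑ i : ι, e i = 1) :
    (∀ a : A, (a ⊗ₜ[R] (1 : A)) * (∑ i : ι, e i ⊗ₜ[R] e i)
        = (∑ i : ι, e i ⊗ₜ[R] e i) * ((1 : A) ⊗ₜ[R] a))
      ∧ LinearMap.mul' R A (∑ i : ι, e i ⊗ₜ[R] e i) = 1 := by
  constructor
  · intro a
    rw [Finset.mul_sum, Finset.sum_mul]
    refine Finset.sum_congr rfl fun i _ => ?_
    rw [Algebra.TensorProduct.tmul_mul_tmul, Algebra.TensorProduct.tmul_mul_tmul,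
      one_mul, mul_one, mul_comm a (e i), hchar,
      ← TensorProduct.smul_tmul', TensorProduct.tmul_smul]
  · rw [map_sum]
    simp only [LinearMap.mul'_apply, hidem]
    exact hsum
end

section
/- The Burnside R-algebra RB(G) of a finite group G is a separable R-algebra if and only if |G| is invertible in R. -/
/-! If `u` is a separability idempotent and `φ : A → R` a character, then `w = (φ ⊗ id) u`
satisfies `φ w = 1` and `w a = φ a • w`. For `φ = Φ ⊥` and `e = [G/1]`, on which `RB(G)` also
acts through `φ`, this gives `|G| • w = e`, so `|G|` is invertible. Conversely, the marks
`Φ H` assemble into an algebra map `RB(G) → R^ι` whose matrix, the table of marks, is triangular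
once the classes are ordered by order, with diagonal entries `|N_G(H) : H|` dividing `|G|`; so
it is an isomorphism, and `R^ι` is separable. -/

open scoped TensorProduct

theorem Matrix.det_eq_prod_diag_of_off_diag_lt {ι R α : Type*} [Fintype ι] [DecidableEq ι]
    [CommRing R] [LinearOrder α] (M : Matrix ι ι R) (f : ι → α)
    (hM : ∀ i j, i ≠ j → M i j ≠ 0 → f i < f j) : M.det = ∏ i, M i i := by
  let : LinearOrder ι := LinearOrder.lift' (fun i => toLex (f i, Fintype.equivFin ι i))
    fun _ _ h => (Fintype.equivFin ι).injective (congrArg Prod.snd (toLex.injective h))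
  refine det_of_isUpperTriangular fun i j hji => by_contra fun hij => ?_
  have hlt := hM i j (ne_of_gt hji) hij
  exact lt_asymm hji (Prod.Lex.toLex_lt_toLex.mpr (.inl hlt))

namespace Subgroup

variable {G : Type*} [Group G]

noncomputable def mark (H K : Subgroup G) : ℕ := Nat.card {x : G ⧸ K // ∀ h ∈ H, h • x = x}

theorem mark_bot (K : Subgroup G) : mark ⊥ K = K.index := by
  rw [mark, index_eq_card]
  exact Nat.card_congr <| Equiv.subtypeUnivEquiv fun x h hh => by
    rw [mem_bot.mp hh, one_smul]

theorem mark_self_dvd_card [Finite G] (H : Subgroup G) : mark H H ∣ Nat.card G := by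
  have : {x : G ⧸ H // ∀ h ∈ H, h • x = x} ≃ MulAction.fixedPoints H (G ⧸ H) :=
    Equiv.subtypeEquivRight fun x => by simp [MulAction.mem_fixedPoints, Subtype.forall]; rfl
  rw [mark, Nat.card_congr (this.trans (Sylow.fixedPointsMulLeftCosetsEquivQuotient H))]
  exact (card_quotient_dvd_card _).trans (card_subgroup_dvd_card _)

theorem exists_map_conj_le_of_mark_ne_zero {H K : Subgroup G} (h : mark H K ≠ 0) :
    ∃ g : G, H.map (MulAut.conj g).toMonoidHom ≤ K := by
  obtain ⟨⟨x, hx⟩⟩ := (Nat.card_ne_zero.mp h).1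
  obtain ⟨g, rfl⟩ := QuotientGroup.mk_surjective x
  refine ⟨g⁻¹, ?_⟩
  rintro _ ⟨h, hh, rfl⟩
  simpa [mul_assoc] using K.inv_mem (QuotientGroup.eq.mp (hx h hh))

theorem card_lt_of_mark_ne_zero [Finite G] {H K : Subgroup G} (h : mark H K ≠ 0)
    (hHK : ∀ g : G, H.map (MulAut.conj g).toMonoidHom ≠ K) : Nat.card H < Nat.card K := by
  obtain ⟨g, hle⟩ := exists_map_conj_le_of_mark_ne_zero h
  rw [← card_map_of_injective (K := H) (f := (MulAut.conj g).toMonoidHom)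
    (MulAut.conj g).injective]
  exact (card_le_of_le hle).lt_of_ne fun heq => hHK g (eq_of_le_of_card_ge hle heq.ge)

end Subgroup

lemma Pi.mul_single_one {ι R : Type*} [MulZeroOneClass R] [DecidableEq ι] (a : ι → R) (i : ι) :
    a * Pi.single i 1 = a i • Pi.single i 1 := by
  ext j; rcases eq_or_ne j i with rfl | h <;> simp [*]

section Separable

variable {R A B : Type*} [CommSemiring R] [Semiring A] [Algebra R A] [Semiring B] [Algebra R B]

variable (R A) in
def IsSeparabilityIdempotent (u : A ⊗[R] A) : Prop :=
  (∀ a : A, (a ⊗ₜ[R] (1 : A)) * u = u * ((1 : A) ⊗ₜ[R] a)) ∧ LinearMap.mul' R A u = 1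

namespace IsSeparabilityIdempotent

variable {u : A ⊗[R] A}

theorem exists_map_eq_one_and_smul_eq_mul (hu : IsSeparabilityIdempotent R A u)
    (φ : A →ₐ[R] R) : ∃ w : A, φ w = 1 ∧ ∀ a, φ a • w = w * a := by
  let π : A ⊗[R] A →ₐ[R] A :=
    (Algebra.TensorProduct.lid R A).toAlgHom.comp (Algebra.TensorProduct.map φ (AlgHom.id R A))
  have hπ (a b : A) : π (a ⊗ₜ b) = φ a • b := by simp [π]
  refine ⟨π u, ?_, fun a => ?_⟩
  · have : (φ : A →ₗ[R] R) ∘ₗ π.toLinearMap = (φ : A →ₗ[R] R) ∘ₗ LinearMap.mul' R A :=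
      TensorProduct.ext' fun a b => by simp [hπ, Algebra.smul_def]
    simpa [hu.2] using LinearMap.congr_fun this u
  · simpa [hπ, Algebra.smul_def] using congrArg π (hu.1 a)

theorem isUnit_map_of_mul_eq_smul (hu : IsSeparabilityIdempotent R A u) (φ : A →ₐ[R] R)
    {e : A} (he : ∀ a, a * e = φ a • e) (ℓ : A →ₗ[R] R) (hℓ : ℓ e = 1) : IsUnit (φ e) := by
  obtain ⟨w, hw, hwe⟩ := hu.exists_map_eq_one_and_smul_eq_mul φ
  have hew : φ e • w = e := by rw [hwe, he, hw, one_smul]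
  exact .of_mul_eq_one (ℓ w) (by rw [← smul_eq_mul, ← map_smul, hew, hℓ])

theorem map_algEquiv (hu : IsSeparabilityIdempotent R A u) (f : A ≃ₐ[R] B) :
    IsSeparabilityIdempotent R B (Algebra.TensorProduct.congr f f u) := by
  set F := Algebra.TensorProduct.congr f f
  refine ⟨fun b => ?_, ?_⟩
  · obtain ⟨a, rfl⟩ := f.surjective b
    simpa [F] using congrArg F (hu.1 a)
  · have : (f : A →ₗ[R] B) ∘ₗ LinearMap.mul' R A = LinearMap.mul' R B ∘ₗ F.toLinearMap :=
      TensorProduct.ext' fun a b => by simp [F]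
    simpa [hu.2] using (LinearMap.congr_fun this u).symm

end IsSeparabilityIdempotent

theorem isSeparabilityIdempotent_pi (ι : Type*) [Fintype ι] [DecidableEq ι] :
    IsSeparabilityIdempotent R (ι → R) (∑ i, Pi.single i 1 ⊗ₜ[R] Pi.single i 1) := by
  refine ⟨fun a => ?_, ?_⟩
  · simp only [Finset.mul_sum, Finset.sum_mul, Algebra.TensorProduct.tmul_mul_tmul, one_mul,
      mul_one, Pi.mul_single_one, mul_comm _ a, TensorProduct.smul_tmul]
  · simp [Pi.mul_single_one, Finset.univ_sum_single, Pi.one_def]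

end Separable

theorem exists_isSeparabilityIdempotent_of_isUnit_det {R A ι : Type*} [CommRing R] [Ring A]
    [Algebra R A] [Fintype ι] [DecidableEq ι] (b : Module.Basis ι R A) (χ : ι → A →ₐ[R] R)
    (h : IsUnit (Matrix.of fun i j => χ i (b j)).det) :
    ∃ u : A ⊗[R] A, IsSeparabilityIdempotent R A u := by
  have hmat : LinearMap.toMatrix b (Pi.basisFun R ι) (AlgHom.pi χ).toLinearMap =
      Matrix.of fun i j => χ i (b j) := by
    ext i j
    simp [LinearMap.toMatrix_apply]
  rw [← hmat] at h
  let Ψ := AlgEquiv.ofBijective (AlgHom.pi χ) (LinearEquiv.ofIsUnitDet h).bijective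
  exact ⟨_, (isSeparabilityIdempotent_pi ι).map_algEquiv Ψ.symm⟩

/-- `RB(G)` is given by its basis `ℬ i = [G/sG i]` over pairwise non-conjugate subgroups `sG i`,
its marks `Φ H`, and the products `[G/1]·[G/H] = |G:H|·[G/1]` with `[G/1] = ℬ i0`. -/
theorem burnside_algebra_separable_iff_card_isUnit_general
    {R : Type} [CommRing R] {G : Type} [Group G] [Fintype G]
    {A : Type} [CommRing A] [Algebra R A]
    {ι : Type} [Fintype ι] (sG : ι → Subgroup G) (ℬ : Module.Basis ι R A)
    (hirr : ∀ i j : ι,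
      (∃ g : G, Subgroup.map (MulAut.conj g).toMonoidHom (sG i) = sG j) → i = j)
    (i0 : ι) (hi0 : sG i0 = ⊥)
    (Φ : Subgroup G → (A →ₐ[R] R))
    (hΦ : ∀ (H : Subgroup G) (i : ι),
      Φ H (ℬ i) = (Nat.card {x : G ⧸ sG i // ∀ h ∈ H, h • x = x} : R))
    (hmul : ∀ i : ι, ℬ i0 * ℬ i = ((sG i).index : R) • ℬ i0) :
    (∃ u : A ⊗[R] A,
        (∀ a : A, (a ⊗ₜ[R] (1 : A)) * u = u * ((1 : A) ⊗ₜ[R] a))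
          ∧ LinearMap.mul' R A u = 1)
      ↔ IsUnit ((Fintype.card G : R)) := by
  classical
  have hmark (H : Subgroup G) (i : ι) : Φ H (ℬ i) = H.mark (sG i) := hΦ H i
  constructor
  · rintro ⟨u, hu⟩
    have he (a : A) : a * ℬ i0 = Φ ⊥ a • ℬ i0 := by
      refine LinearMap.congr_fun (ℬ.ext (f₁ := LinearMap.mulRight R (ℬ i0))
        (f₂ := LinearMap.toSpanSingleton R A (ℬ i0) ∘ₗ (Φ ⊥).toLinearMap) fun j => ?_) a
      simp [mul_comm _ (ℬ i0), hmul, hmark, Subgroup.mark_bot]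
    have hunit := IsSeparabilityIdempotent.isUnit_map_of_mul_eq_smul hu (Φ ⊥) he (ℬ.coord i0)
      (by simp)
    rwa [hmark, hi0, Subgroup.mark_bot, Subgroup.index_bot, Nat.card_eq_fintype_card] at hunit
  · intro hG
    refine exists_isSeparabilityIdempotent_of_isUnit_det ℬ (fun i => Φ (sG i)) ?_
    rw [Matrix.det_eq_prod_diag_of_off_diag_lt _ (fun i => Nat.card (sG i))]
    · refine IsUnit.prod_univ_iff.mpr fun i => isUnit_of_dvd_unit ?_ hG
      simpa [hmark, ← Nat.card_eq_fintype_card] using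
        Nat.cast_dvd_cast (Subgroup.mark_self_dvd_card (sG i))
    · intro i j hij hne
      refine Subgroup.card_lt_of_mark_ne_zero (fun h => hne ?_) fun g h => hij (hirr i j ⟨g, h⟩)
      simp [hmark, h]

/-- The Burnside `R`-algebra `A = RB(G)` of a finite group `G` is separable (i.e. admits
`u ∈ A ⊗[R] A` with `a·u = u·a` for all `a` and `μ(u) = 1`) if and only if `|G|` is invertible
in `R`.  Here `RB(G)` is axiomatized by: an `R`-basis `ℬ i = [G/sG i]` indexed by a complete
irredundant set `sG` of representatives of conjugacy classes of subgroups of `G`, with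
`[G/G] = 1`, the mark algebra homomorphisms `Φ H` sending `[G/K]` to the number of `H`-fixed
points of `G/K`, and the multiplication rule `[G/1]·[G/H] = |G:H|·[G/1]`. -/
theorem burnside_algebra_separable_iff_card_isUnit
    {R : Type} [CommRing R] {G : Type} [Group G] [Fintype G]
    {A : Type} [CommRing A] [Algebra R A]
    {ι : Type} [Fintype ι] (sG : ι → Subgroup G) (ℬ : Module.Basis ι R A)
    (hreps : ∀ H : Subgroup G, ∃ (i : ι) (g : G),
      Subgroup.map (MulAut.conj g).toMonoidHom (sG i) = H)
    (hirr : ∀ i j : ι,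
      (∃ g : G, Subgroup.map (MulAut.conj g).toMonoidHom (sG i) = sG j) → i = j)
    (i0 itop : ι) (hi0 : sG i0 = ⊥) (hitop : sG itop = ⊤)
    (hone : ℬ itop = 1)
    (Φ : Subgroup G → (A →ₐ[R] R))
    (hΦ : ∀ (H : Subgroup G) (i : ι),
      Φ H (ℬ i) = (Nat.card {x : G ⧸ sG i // ∀ h ∈ H, h • x = x} : R))
    (hmul : ∀ i : ι, ℬ i0 * ℬ i = ((sG i).index : R) • ℬ i0) :
    (∃ u : A ⊗[R] A,
        (∀ a : A, (a ⊗ₜ[R] (1 : A)) * u = u * ((1 : A) ⊗ₜ[R] a))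
          ∧ LinearMap.mul' R A u = 1)
      ↔ IsUnit ((Fintype.card G : R)) :=
  burnside_algebra_separable_iff_card_isUnit_general sG ℬ hirr i0 hi0 Φ hΦ hmul
end

section
/- Let G be a finite group with |G| invertible in R. The idempotent e_H^G ∈ RB(G) is characterized by the property that e_H^G · α = Φ_H(α) e_H^G for all α ∈ RB(G), where Φ_H is the mark homomorphism at H. -/
/-!
A coset `gK` is fixed by `H'` exactly when `g⁻¹H'g ≤ K`, so `|K| · Φ_{H'}[G/K]` counts the `g`
with `g⁻¹H'g ≤ K`. Möbius inversion over the subgroup lattice therefore gives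
`Φ_{H'}(e) = nInv · #{g | g⁻¹H'g = H}`, which is `1` at `H' = H` (the count is `|N_G(H)|`) and
`0` at every other representative. The marks at the representatives separate the points of
`RB(G)`: on the basis `[G/K]` their matrix is triangular with respect to `|K|`, with diagonal
entries `|N_G(K)/K|` dividing `|G|`, hence units. So `e·α` and `Φ_H(α)·e`, having the same marks,
are equal, and any `f` with the same property satisfies `f = f·e = Φ_H(f)·e`.
-/

open Finset

section FixedPoints

variable {G : Type*} [Group G]

lemma smul_mk_fixed_iff_map_conj_le (H K : Subgroup G) (g : G) :
    (∀ h ∈ H, h • (g : G ⧸ K) = g) ↔ H.map (MulAut.conj g⁻¹).toMonoidHom ≤ K := by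
  rw [Subgroup.map_le_iff_le_comap]
  constructor
  · intro hfix h hh
    have := hfix h⁻¹ (inv_mem hh)
    rw [MulAction.Quotient.smul_mk, QuotientGroup.eq] at this
    simpa [Subgroup.mem_comap, mul_assoc] using this
  · intro hle h hh
    have := K.inv_mem (hle hh)
    rw [MulAction.Quotient.smul_mk, QuotientGroup.eq]
    simpa [Subgroup.mem_comap, mul_assoc, mul_inv_rev] using this

lemma card_map_conj_inv_le (H K : Subgroup G) :
    Nat.card {g : G // H.map (MulAut.conj g⁻¹).toMonoidHom ≤ K}
      = Nat.card K * Nat.card {x : G ⧸ K // ∀ h ∈ H, h • x = x} := by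
  refine (Nat.card_congr ?_).trans (QuotientGroup.card_preimage_mk K {x | ∀ h ∈ H, h • x = x})
  exact Equiv.subtypeEquivRight fun g => (smul_mk_fixed_iff_map_conj_le H K g).symm

lemma map_conj_inv_eq_self_iff {H : Subgroup G} {g : G} :
    H.map (MulAut.conj g⁻¹).toMonoidHom = H ↔ g ∈ Subgroup.normalizer (H : Set G) := by
  rw [← inv_mem_iff, Subgroup.mem_normalizer_iff_map_conj_eq]
  rfl

lemma card_map_conj_inv_eq_self (H : Subgroup G) :
    Nat.card {g : G // H.map (MulAut.conj g⁻¹).toMonoidHom = H}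
      = Nat.card (Subgroup.normalizer (H : Set G)) :=
  Nat.card_congr (Equiv.subtypeEquivRight fun _ => map_conj_inv_eq_self_iff)

variable [Finite G]

lemma map_conj_inv_eq_of_le {H K : Subgroup G} {g : G}
    (hle : H.map (MulAut.conj g⁻¹).toMonoidHom ≤ K) (hcard : Nat.card K ≤ Nat.card H) :
    H.map (MulAut.conj g⁻¹).toMonoidHom = K :=
  Subgroup.eq_of_le_of_card_ge hle
    (by rwa [Subgroup.card_map_of_injective (MulAut.conj g⁻¹).injective])

lemma exists_map_conj_eq_of_fixed {H K : Subgroup G} (hcard : Nat.card K ≤ Nat.card H)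
    {x : G ⧸ K} (hx : ∀ h ∈ H, h • x = x) :
    ∃ g : G, H.map (MulAut.conj g).toMonoidHom = K := by
  obtain ⟨g, rfl⟩ := QuotientGroup.mk_surjective x
  exact ⟨g⁻¹, map_conj_inv_eq_of_le ((smul_mk_fixed_iff_map_conj_le H K g).mp hx) hcard⟩

lemma card_fixed_quotient_self_dvd_card (H : Subgroup G) :
    Nat.card {x : G ⧸ H // ∀ h ∈ H, h • x = x} ∣ Nat.card G := by
  have hnormalizer : Nat.card H * Nat.card {x : G ⧸ H // ∀ h ∈ H, h • x = x}
      = Nat.card (Subgroup.normalizer (H : Set G)) := by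
    rw [← card_map_conj_inv_le, ← card_map_conj_inv_eq_self]
    exact Nat.card_congr (Equiv.subtypeEquivRight fun _ =>
      ⟨fun hle => map_conj_inv_eq_of_le hle le_rfl, le_of_eq⟩)
  exact (Dvd.intro_left _ hnormalizer).trans (Subgroup.card_subgroup_dvd_card _)

end FixedPoints

section Mobius

variable {α : Type*} [PartialOrder α] [Fintype α] [DecidableLE α]

lemma sum_mobius_filter_le_le [DecidableEq α] (mu : α → α → ℤ) (hself : ∀ H, mu H H = 1)
    (hrec : ∀ K H, K < H → ∑ L ∈ univ.filter (fun L => K ≤ L ∧ L ≤ H), mu L H = 0)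
    (L H : α) :
    ∑ K ∈ univ.filter (fun K => L ≤ K ∧ K ≤ H), mu K H = if L = H then 1 else 0 := by
  split_ifs with hLH
  · subst hLH
    rw [show univ.filter (fun K => L ≤ K ∧ K ≤ L) = {L} by
      ext; simp [le_antisymm_iff, and_comm], sum_singleton, hself]
  · by_cases hle : L ≤ H
    · exact hrec L H (lt_of_le_of_ne hle hLH)
    · refine sum_eq_zero fun K hK => absurd ?_ hle
      exact le_trans (mem_filter.mp hK).2.1 (mem_filter.mp hK).2.2

lemma sum_mobius_mul_card_le {X : Type*} [Fintype X] (mu : α → α → ℤ)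
    (hself : ∀ H, mu H H = 1)
    (hrec : ∀ K H, K < H → ∑ L ∈ univ.filter (fun L => K ≤ L ∧ L ≤ H), mu L H = 0)
    (f : X → α) (H : α) :
    ∑ K ∈ univ.filter (· ≤ H), mu K H * (Nat.card {x // f x ≤ K} : ℤ)
      = Nat.card {x // f x = H} := by
  classical
  simp only [Nat.card_eq_fintype_card, Fintype.card_subtype, card_filter, Nat.cast_sum,
    Nat.cast_ite, Nat.cast_one, Nat.cast_zero, mul_sum, mul_ite, mul_one, mul_zero]
  rw [sum_comm]
  refine sum_congr rfl fun x _ => ?_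
  rw [← sum_filter, filter_filter, ← sum_mobius_filter_le_le mu hself hrec (f x) H]
  exact sum_congr (by ext; simp [and_comm]) fun _ _ => rfl

end Mobius

lemma Module.Basis.eq_zero_of_triangular {ι R M β : Type*} [Semiring R] [AddCommMonoid M]
    [Module R M] [Fintype ι] [LinearOrder β] (ℬ : Module.Basis ι R M) (φ : ι → M →ₗ[R] R)
    (height : ι → β) (hdiag : ∀ j, IsUnit (φ j (ℬ j)))
    (htri : ∀ j k, j ≠ k → height k ≤ height j → φ j (ℬ k) = 0)
    {a : M} (ha : ∀ j, φ j a = 0) : a = 0 := by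
  classical
  by_contra ha0
  have hsupp : (ℬ.repr a).support.Nonempty := by
    rwa [Finsupp.support_nonempty_iff, ne_eq, LinearEquiv.map_eq_zero_iff]
  obtain ⟨j, hj, hmax⟩ := exists_max_image _ height hsupp
  have hφj : φ j a = ℬ.repr a j * φ j (ℬ j) := by
    conv_lhs => rw [← ℬ.sum_repr a]
    simp only [map_sum, map_smul, smul_eq_mul]
    refine Fintype.sum_eq_single j fun k hkj => ?_
    by_cases hk : ℬ.repr a k = 0
    · rw [hk, zero_mul]
    · rw [htri j k (Ne.symm hkj) (hmax k (Finsupp.mem_support_iff.mpr hk)), mul_zero]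
  exact Finsupp.mem_support_iff.mp hj ((hdiag j).mul_left_eq_zero.mp (hφj ▸ ha j))

section Burnside

variable {G R A : Type*} [Group G]

lemma map_sum_mobius_smul [Fintype G] [Fintype (Subgroup G)] [DecidableLE (Subgroup G)]
    [Ring R] [AddCommGroup A] {F : Type*} [FunLike F A R] [AddMonoidHomClass F A R]
    (b : Subgroup G → A) (φ : F) (H' : Subgroup G)
    (hφ : ∀ K, φ (b K) = (Nat.card {x : G ⧸ K // ∀ h ∈ H', h • x = x} : R))
    (mu : Subgroup G → Subgroup G → ℤ) (hself : ∀ H, mu H H = 1)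
    (hrec : ∀ K H, K < H → ∑ L ∈ univ.filter (fun L => K ≤ L ∧ L ≤ H), mu L H = 0)
    (H : Subgroup G) :
    φ (∑ K ∈ univ.filter (· ≤ H), ((Nat.card K : ℤ) * mu K H) • b K)
      = Nat.card {g : G // H'.map (MulAut.conj g⁻¹).toMonoidHom = H} := by
  have hmob := congrArg (Int.cast : ℤ → R) (sum_mobius_mul_card_le mu hself hrec
    (fun g : G => H'.map (MulAut.conj g⁻¹).toMonoidHom) H)
  push_cast [card_map_conj_inv_le] at hmob
  rw [← hmob, map_sum]
  refine sum_congr rfl fun K _ => ?_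
  rw [map_zsmul, hφ, zsmul_eq_mul]
  push_cast
  rw [← mul_assoc, (Int.cast_commute _ _).eq]

lemma eq_zero_of_forall_mark_eq_zero [Finite G] [CommSemiring R] [AddCommMonoid A] [Module R A]
    {ι : Type*} [Fintype ι] (sG : ι → Subgroup G)
    (hirr : ∀ i j : ι,
      (∃ g : G, Subgroup.map (MulAut.conj g).toMonoidHom (sG i) = sG j) → i = j)
    (b : Subgroup G → A) (ℬ : Module.Basis ι R A) (hbℬ : ∀ i, b (sG i) = ℬ i)
    (Φ : Subgroup G → A →ₗ[R] R)
    (hΦ : ∀ H K, Φ H (b K) = (Nat.card {x : G ⧸ K // ∀ h ∈ H, h • x = x} : R))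
    (hG : IsUnit (Nat.card G : R)) {a : A} (ha : ∀ j, Φ (sG j) a = 0) : a = 0 := by
  refine ℬ.eq_zero_of_triangular (fun j => Φ (sG j)) (fun j => Nat.card (sG j))
    (fun j => ?_) (fun j k hjk hcard => ?_) ha
  · rw [← hbℬ, hΦ]
    exact isUnit_of_dvd_unit (Nat.cast_dvd_cast (card_fixed_quotient_self_dvd_card _)) hG
  · have : IsEmpty {x : G ⧸ sG k // ∀ h ∈ sG j, h • x = x} :=
      ⟨fun ⟨_, hx⟩ => hjk (hirr j k (exists_map_conj_eq_of_fixed hcard hx))⟩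
    rw [← hbℬ, hΦ, Nat.card_of_isEmpty, Nat.cast_zero]

end Burnside

/-- Let `G` be a finite group with `|G|` invertible in `R`.  In the Burnside algebra
`A = RB(G)` (axiomatized by: conjugation-invariant classes `b K = [G/K]`, an `R`-basis
`ℬ i = b (sG i)` over a complete irredundant set `sG` of representatives of conjugacy classes
of subgroups with `[G/G] = 1`, and mark algebra homomorphisms `Φ H` counting `H`-fixed
points), the idempotent
`e_H^G = (1/|N_G(H)|) Σ_{K ≤ H} |K| μ(K,H) [G/K]` (here `μ` is the Möbius function of the
subgroup lattice, axiomatized by its defining recursion) is characterized by the property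
`e_H^G · α = Φ_H(α) · e_H^G` for all `α`: it satisfies this property, `Φ_H(e_H^G) = 1`, and
any `f` satisfying the property equals `Φ_H(f) • e_H^G`. -/
theorem burnside_idempotent_characterization
    {R : Type} [CommRing R] {G : Type} [Group G] [Fintype G]
    [Fintype (Subgroup G)] [∀ K H : Subgroup G, Decidable (K ≤ H)]
    {A : Type} [CommRing A] [Algebra R A]
    {ι : Type} [Fintype ι] (sG : ι → Subgroup G)
    (hreps : ∀ H : Subgroup G, ∃ (i : ι) (g : G),
      Subgroup.map (MulAut.conj g).toMonoidHom (sG i) = H)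
    (hirr : ∀ i j : ι,
      (∃ g : G, Subgroup.map (MulAut.conj g).toMonoidHom (sG i) = sG j) → i = j)
    (b : Subgroup G → A)
    (hbconj : ∀ (g : G) (K : Subgroup G),
      b (Subgroup.map (MulAut.conj g).toMonoidHom K) = b K)
    (ℬ : Module.Basis ι R A) (hbℬ : ∀ i : ι, b (sG i) = ℬ i)
    (itop : ι) (hitop : sG itop = ⊤) (hone : ℬ itop = 1)
    (Φ : Subgroup G → (A →ₐ[R] R))
    (hΦ : ∀ H K : Subgroup G,
      Φ H (b K) = (Nat.card {x : G ⧸ K // ∀ h ∈ H, h • x = x} : R))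
    (hG : IsUnit (Fintype.card G : R))
    (mu : Subgroup G → Subgroup G → ℤ)
    (hmuSelf : ∀ H : Subgroup G, mu H H = 1)
    (hmuRec : ∀ K H : Subgroup G, K < H →
      (∑ L ∈ Finset.univ.filter (fun L : Subgroup G => K ≤ L ∧ L ≤ H), mu L H) = 0)
    (i : ι) (nInv : R)
    (hnInv : nInv * ((Nat.card (Subgroup.normalizer (sG i : Set G)) : R)) = 1)
    (e : A)
    (he : e = nInv • ∑ K ∈ Finset.univ.filter (fun K : Subgroup G => K ≤ sG i),
      (((Nat.card K : ℤ) * mu K (sG i)) • b K)) :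
    (∀ α : A, e * α = Φ (sG i) α • e)
      ∧ Φ (sG i) e = 1
      ∧ (∀ f : A, (∀ α : A, f * α = Φ (sG i) α • f) → f = Φ (sG i) f • e) := by
  have hmark : ∀ H,
      Φ H e = nInv * Nat.card {g : G // H.map (MulAut.conj g⁻¹).toMonoidHom = sG i} := fun H => by
    rw [he, map_smul, smul_eq_mul, map_sum_mobius_smul b (Φ H) H (hΦ H) mu hmuSelf hmuRec]
  have hmark_self : Φ (sG i) e = 1 := by rw [hmark, card_map_conj_inv_eq_self, hnInv]
  have hmark_ne : ∀ j ≠ i, Φ (sG j) e = 0 := fun j hji => by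
    have : IsEmpty {g : G // (sG j).map (MulAut.conj g⁻¹).toMonoidHom = sG i} :=
      ⟨fun ⟨g, hg⟩ => hji (hirr j i ⟨g⁻¹, hg⟩)⟩
    rw [hmark, Nat.card_of_isEmpty, Nat.cast_zero, mul_zero]
  have hinj : ∀ a : A, (∀ j, Φ (sG j) a = 0) → a = 0 := fun a =>
    eq_zero_of_forall_mark_eq_zero sG hirr b ℬ hbℬ (fun H => (Φ H).toLinearMap) hΦ
      (by rwa [Nat.card_eq_fintype_card])
  have heig : ∀ α, e * α = Φ (sG i) α • e := fun α => sub_eq_zero.mp <| hinj _ fun j => by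
    rcases eq_or_ne j i with rfl | hji
    · simp [hmark_self]
    · simp [hmark_ne j hji]
  refine ⟨heig, hmark_self, fun f hf => ?_⟩
  calc f = f * e := by rw [hf e, hmark_self, one_smul]
    _ = Φ (sG i) f • e := by rw [mul_comm, heig]
end

section
/- There is no locally constant map m: ℤ̂^× → ℤ with m(1) = 0 such that s(χ) − χ = m(s)(s(χ) − χ) for every finite group G, every virtual character χ ∈ R_ℂ(G), and every s ∈ ℤ̂^×. Consequently, the derivation d: χ ↦ (s ↦ s(χ) − χ) from R_ℂ into the bimodule L of locally constant maps vanishing at 1 is not inner. -/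
/-- The profinite group `ℤ̂ˣ = lim_n (ℤ/nℤ)ˣ`, as compatible families of units along the
projections `(ℤ/nℤ)ˣ → (ℤ/mℤ)ˣ` for `m ∣ n`. -/
def ZhatUnits : Type :=
  {s : ∀ n : ℕ+, (ZMod n)ˣ //
    ∀ (m n : ℕ+) (h : (m : ℕ) ∣ (n : ℕ)),
      Units.map (ZMod.castHom h (ZMod m)).toMonoidHom (s n) = s m}

instance : One ZhatUnits :=
  ⟨⟨fun _ => 1, fun _ _ _ => by simp⟩⟩

/-- The Galois-twisting action of `s ∈ ℤ̂ˣ` on (virtual) characters of a group `G`, computed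
via level `n`: `(s(χ))(g) = χ(g^{π_n(s)})`. -/
def zhatAct {G : Type} [Group G] (n : ℕ+) (s : ZhatUnits) (χ : G → ℂ) : G → ℂ :=
  fun g => χ (g ^ (((s.1 n : (ZMod n)ˣ) : ZMod n).val))

/-- Elements of `ZMod N` are determined by their residues modulo the `p`-primary part
`ordProj[p] N` and its complement `ordCompl[p] N`. -/
theorem myCrtUnique (p : ℕ) (hp : p.Prime) (N : ℕ) (hN : N ≠ 0) (x y : ZMod N)
    (ha : ZMod.castHom (Nat.ordProj_dvd N p) (ZMod (ordProj[p] N)) x =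
      ZMod.castHom (Nat.ordProj_dvd N p) (ZMod (ordProj[p] N)) y)
    (hb : ZMod.castHom (Nat.ordCompl_dvd N p) (ZMod (ordCompl[p] N)) x =
      ZMod.castHom (Nat.ordCompl_dvd N p) (ZMod (ordCompl[p] N)) y) : x = y := by
  haveI : NeZero N := ⟨hN⟩
  have hz : ∀ z : ZMod N,
      ZMod.castHom (Nat.ordProj_dvd N p) (ZMod (ordProj[p] N)) z = 0 →
      ZMod.castHom (Nat.ordCompl_dvd N p) (ZMod (ordCompl[p] N)) z = 0 → z = 0 := by
    intro z h1 h2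
    have hzv : ((z.val : ℕ) : ZMod N) = z := ZMod.natCast_zmod_val z
    rw [← hzv, map_natCast, ZMod.natCast_eq_zero_iff] at h1 h2
    have hco : (ordProj[p] N).Coprime (ordCompl[p] N) :=
      Nat.Coprime.pow_left _ (Nat.coprime_ordCompl hp hN)
    have hdvd : ordProj[p] N * ordCompl[p] N ∣ z.val :=
      Nat.Coprime.mul_dvd_of_dvd_of_dvd hco h1 h2
    rw [Nat.ordProj_mul_ordCompl_eq_self N p] at hdvd
    have := Nat.eq_zero_of_dvd_of_lt hdvd (ZMod.val_lt z)
    rw [← hzv, this, Nat.cast_zero]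
  have := hz (x - y) (by rw [map_sub, ha, sub_self]) (by rw [map_sub, hb, sub_self])
  linear_combination this

/-- The CRT integer at level `N`: `≡ -1` mod the `p`-part, `≡ 1` mod the rest. -/
noncomputable def crtK (p : ℕ) (hp : p.Prime) (N : ℕ) (hN : N ≠ 0) :
    {k : ℕ // k ≡ ordProj[p] N - 1 [MOD ordProj[p] N] ∧ k ≡ 1 [MOD ordCompl[p] N]} :=
  Nat.chineseRemainder (n := ordProj[p] N) (m := ordCompl[p] N)
    (Nat.Coprime.pow_left _ (Nat.coprime_ordCompl hp hN)) (ordProj[p] N - 1) 1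

/-- The CRT element at level `N`. -/
noncomputable def crtElt (p : ℕ) (hp : p.Prime) (N : ℕ) (hN : N ≠ 0) : ZMod N :=
  ((crtK p hp N hN : ℕ) : ZMod N)

theorem crtElt_spec_a (p : ℕ) (hp : p.Prime) (N : ℕ) (hN : N ≠ 0) :
    ZMod.castHom (Nat.ordProj_dvd N p) (ZMod (ordProj[p] N)) (crtElt p hp N hN) = -1 := by
  have h := (crtK p hp N hN).2.1
  rw [crtElt, map_natCast, (ZMod.natCast_eq_natCast_iff _ _ _).mpr h]
  have h1 : (1:ℕ) ≤ ordProj[p] N := Nat.one_le_iff_ne_zero.mpr (pow_ne_zero _ hp.pos.ne')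
  have : ((ordProj[p] N - 1 : ℕ) : ZMod (ordProj[p] N)) + 1 = 0 := by
    rw [Nat.cast_sub h1, ZMod.natCast_self, Nat.cast_one]; ring
  linear_combination this

theorem crtElt_spec_b (p : ℕ) (hp : p.Prime) (N : ℕ) (hN : N ≠ 0) :
    ZMod.castHom (Nat.ordCompl_dvd N p) (ZMod (ordCompl[p] N)) (crtElt p hp N hN) = 1 := by
  have h := (crtK p hp N hN).2.2
  rw [crtElt, map_natCast, (ZMod.natCast_eq_natCast_iff _ _ _).mpr h, Nat.cast_one]

theorem crtElt_mul_self (p : ℕ) (hp : p.Prime) (N : ℕ) (hN : N ≠ 0) :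
    crtElt p hp N hN * crtElt p hp N hN = 1 := by
  refine myCrtUnique p hp N hN _ _ ?_ ?_
  · rw [map_mul, map_one, crtElt_spec_a]; ring
  · rw [map_mul, map_one, crtElt_spec_b]; ring

/-- The element of `ℤ̂ˣ` which is `-1` on the `p`-part and `1` elsewhere. -/
noncomputable def sOf (p : ℕ) (hp : p.Prime) : ZhatUnits := by
  refine ⟨fun n => ⟨crtElt p hp n n.pos.ne', crtElt p hp n n.pos.ne',
    crtElt_mul_self p hp n n.pos.ne', crtElt_mul_self p hp n n.pos.ne'⟩, ?_⟩
  intro m n h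
  ext
  show ZMod.castHom h (ZMod m) (crtElt p hp n n.pos.ne') = crtElt p hp m m.pos.ne'
  refine myCrtUnique p hp m m.pos.ne' _ _ ?_ ?_
  · have hd : ordProj[p] (m:ℕ) ∣ ordProj[p] (n:ℕ) :=
      Nat.ordProj_dvd_ordProj_of_dvd n.pos.ne' h p
    have e1 : (ZMod.castHom (Nat.ordProj_dvd (m:ℕ) p) (ZMod (ordProj[p] (m:ℕ)))).comp
        (ZMod.castHom h (ZMod (m:ℕ))) = ZMod.castHom ((Nat.ordProj_dvd (m:ℕ) p).trans h)
        (ZMod (ordProj[p] (m:ℕ))) := ZMod.castHom_comp _ _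
    have e2 : (ZMod.castHom hd (ZMod (ordProj[p] (m:ℕ)))).comp
        (ZMod.castHom (Nat.ordProj_dvd (n:ℕ) p) (ZMod (ordProj[p] (n:ℕ)))) =
        ZMod.castHom ((Nat.ordProj_dvd (m:ℕ) p).trans h) (ZMod (ordProj[p] (m:ℕ))) :=
      ZMod.castHom_comp _ _
    calc ZMod.castHom _ (ZMod (ordProj[p] (m:ℕ)))
          (ZMod.castHom h (ZMod (m:ℕ)) (crtElt p hp n n.pos.ne'))
        = ZMod.castHom ((Nat.ordProj_dvd (m:ℕ) p).trans h) (ZMod (ordProj[p] (m:ℕ)))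
            (crtElt p hp n n.pos.ne') := by rw [← e1]; rfl
      _ = ZMod.castHom hd (ZMod (ordProj[p] (m:ℕ)))
            (ZMod.castHom (Nat.ordProj_dvd (n:ℕ) p) (ZMod (ordProj[p] (n:ℕ)))
              (crtElt p hp n n.pos.ne')) := by rw [← e2]; rfl
      _ = -1 := by rw [crtElt_spec_a, map_neg, map_one]
      _ = ZMod.castHom (Nat.ordProj_dvd (m:ℕ) p) (ZMod (ordProj[p] (m:ℕ)))
            (crtElt p hp m m.pos.ne') := (crtElt_spec_a p hp m m.pos.ne').symm
  · have hd : ordCompl[p] (m:ℕ) ∣ ordCompl[p] (n:ℕ) :=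
      Nat.ordCompl_dvd_ordCompl_of_dvd h p
    have e1 : (ZMod.castHom (Nat.ordCompl_dvd (m:ℕ) p) (ZMod (ordCompl[p] (m:ℕ)))).comp
        (ZMod.castHom h (ZMod (m:ℕ))) = ZMod.castHom ((Nat.ordCompl_dvd (m:ℕ) p).trans h)
        (ZMod (ordCompl[p] (m:ℕ))) := ZMod.castHom_comp _ _
    have e2 : (ZMod.castHom hd (ZMod (ordCompl[p] (m:ℕ)))).comp
        (ZMod.castHom (Nat.ordCompl_dvd (n:ℕ) p) (ZMod (ordCompl[p] (n:ℕ)))) =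
        ZMod.castHom ((Nat.ordCompl_dvd (m:ℕ) p).trans h) (ZMod (ordCompl[p] (m:ℕ))) :=
      ZMod.castHom_comp _ _
    calc ZMod.castHom _ (ZMod (ordCompl[p] (m:ℕ)))
          (ZMod.castHom h (ZMod (m:ℕ)) (crtElt p hp n n.pos.ne'))
        = ZMod.castHom ((Nat.ordCompl_dvd (m:ℕ) p).trans h) (ZMod (ordCompl[p] (m:ℕ)))
            (crtElt p hp n n.pos.ne') := by rw [← e1]; rfl
      _ = ZMod.castHom hd (ZMod (ordCompl[p] (m:ℕ)))
            (ZMod.castHom (Nat.ordCompl_dvd (n:ℕ) p) (ZMod (ordCompl[p] (n:ℕ)))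
              (crtElt p hp n n.pos.ne')) := by rw [← e2]; rfl
      _ = 1 := by rw [crtElt_spec_b, map_one]
      _ = ZMod.castHom (Nat.ordCompl_dvd (m:ℕ) p) (ZMod (ordCompl[p] (m:ℕ)))
            (crtElt p hp m m.pos.ne') := (crtElt_spec_b p hp m m.pos.ne').symm

theorem sOf_eq_one (p : ℕ) (hp : p.Prime) (n : ℕ+) (h : ¬ p ∣ (n:ℕ)) :
    (sOf p hp).1 n = 1 := by
  ext
  show crtElt p hp n n.pos.ne' = (1 : ZMod (n:ℕ))
  refine myCrtUnique p hp n n.pos.ne' _ _ ?_ ?_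
  · haveI : Subsingleton (ZMod (ordProj[p] (n:ℕ))) := by
      rw [Nat.factorization_eq_zero_of_not_dvd h, pow_zero]
      infer_instance
    exact Subsingleton.elim _ _
  · rw [crtElt_spec_b, map_one]

theorem sOf_at_p (p : ℕ) (hp : p.Prime) :
    ((sOf p hp).1 ⟨p, hp.pos⟩).val = (-1 : ZMod ((⟨p, hp.pos⟩:ℕ+):ℕ)) := by
  show crtElt p hp p hp.pos.ne' = -1
  refine myCrtUnique p hp p hp.pos.ne' _ _ ?_ ?_
  · rw [crtElt_spec_a, map_neg, map_one]
  · haveI : Subsingleton (ZMod (ordCompl[p] p)) := by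
      rw [hp.factorization_self, pow_one, Nat.div_self hp.pos]
      infer_instance
    exact Subsingleton.elim _ _

section Rep

variable (p : ℕ) [NeZero p] (ζ : ℂ) (hζ : ζ ^ p = 1)

/-- The multiplicative character `g ↦ ζ^{g.val}` of `ZMod p`. -/
def myChar : Multiplicative (ZMod p) →* ℂ where
  toFun g := ζ ^ (Multiplicative.toAdd g).val
  map_one' := by
    show ζ ^ (0 : ZMod p).val = 1
    rw [ZMod.val_zero, pow_zero]
  map_mul' a b := by
    show ζ ^ ((Multiplicative.toAdd a + Multiplicative.toAdd b).val) = _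
    rw [ZMod.val_add, ← pow_eq_pow_mod _ hζ, pow_add]

/-- The associated one-dimensional representation. -/
def myRep : Representation ℂ (Multiplicative (ZMod p)) ℂ :=
  ((Algebra.lmul ℂ ℂ).toRingHom.toMonoidHom).comp (myChar p ζ hζ)

theorem myFDRep_char (g : Multiplicative (ZMod p)) :
    (FDRep.of (myRep p ζ hζ)).character g = ζ ^ (Multiplicative.toAdd g).val := by
  show LinearMap.trace ℂ _ ((myRep p ζ hζ) g) = _
  have h1 : (myRep p ζ hζ) g = (myChar p ζ hζ g) • LinearMap.id := by
    ext
    simp [myRep, Algebra.lmul, myChar]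
  rw [h1, map_smul, LinearMap.trace_id]
  show (myChar p ζ hζ g) • ((Module.finrank ℂ ℂ : ℂ)) = _
  rw [Module.finrank_self, Nat.cast_one, smul_eq_mul, mul_one]
  rfl

end Rep

/-- There is no locally constant map `m : ℤ̂ˣ → ℤ` with `m(1) = 0` such that
`s(χ) − χ = m(s)·(s(χ) − χ)` for every finite group `G`, every virtual complex character `χ`
of `G` and every `s ∈ ℤ̂ˣ`.  Consequently, the derivation `χ ↦ (s ↦ s(χ) − χ)` of `R_ℂ` into
the bimodule of locally constant maps vanishing at `1` is not inner. -/
theorem twist_derivation_not_inner :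
    ¬ ∃ m : ZhatUnits → ℤ,
        (∃ n : ℕ+, ∀ s t : ZhatUnits, s.1 n = t.1 n → m s = m t)
          ∧ m 1 = 0
          ∧ (∀ (G : Type) [Group G] [Fintype G] (n : ℕ+),
              Monoid.exponent G ∣ (n : ℕ) →
              ∀ χ : G → ℂ,
                χ ∈ AddSubgroup.closure
                  (Set.range fun V : FDRep ℂ G => FDRep.character V) →
              ∀ (s : ZhatUnits) (g : G),
                zhatAct n s χ g - χ g = (m s : ℂ) * (zhatAct n s χ g - χ g)) := by
  rintro ⟨m, ⟨n₀, hloc⟩, hone, heq⟩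
  obtain ⟨p, hple, hp⟩ := Nat.exists_infinite_primes ((n₀ : ℕ) + 3)
  have hp3 : 3 ≤ p := le_trans (by omega) hple
  have hpn₀ : ¬ p ∣ (n₀ : ℕ) := by
    intro hd
    have := Nat.le_of_dvd n₀.pos hd
    omega
  haveI : NeZero p := ⟨hp.pos.ne'⟩
  set s : ZhatUnits := sOf p hp with hs
  have hms : m s = 0 := by
    have : m s = m 1 := hloc s 1 (by rw [hs, sOf_eq_one p hp n₀ hpn₀]; rfl)
    rw [this, hone]
  set ζ : ℂ := Complex.exp (2 * Real.pi * Complex.I / p) with hζdef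
  have hζ : IsPrimitiveRoot ζ p := Complex.isPrimitiveRoot_exp p hp.pos.ne'
  have hζp : ζ ^ p = 1 := hζ.pow_eq_one
  set np : ℕ+ := ⟨p, hp.pos⟩ with hnp
  have hexp : Monoid.exponent (Multiplicative (ZMod p)) ∣ (np : ℕ) := by
    have h := Group.exponent_dvd_card (G := Multiplicative (ZMod p))
    rwa [Fintype.card_multiplicative, ZMod.card] at h
  set χ : Multiplicative (ZMod p) → ℂ := (FDRep.of (myRep p ζ hζp)).character with hχ
  have hmem : χ ∈ AddSubgroup.closure
      (Set.range fun V : FDRep ℂ (Multiplicative (ZMod p)) => FDRep.character V) :=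
    AddSubgroup.subset_closure ⟨FDRep.of (myRep p ζ hζp), rfl⟩
  set g : Multiplicative (ZMod p) := Multiplicative.ofAdd (1 : ZMod p) with hg
  have key := heq (Multiplicative (ZMod p)) np hexp χ hmem s g
  rw [hms, Int.cast_zero, zero_mul, sub_eq_zero] at key
  -- Identify the exponent used in `zhatAct`.
  have hk : ((s.1 np : (ZMod (np:ℕ))ˣ) : ZMod (np:ℕ)).val = (-1 : ZMod p).val := by
    rw [hs, hnp]
    exact congrArg ZMod.val (sOf_at_p p hp)
  have hlhs : zhatAct np s χ g = ζ ^ ((-1 : ZMod p).val) := by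
    show χ (g ^ (((s.1 np : (ZMod (np:ℕ))ˣ) : ZMod (np:ℕ)).val)) = _
    rw [hk, hχ, myFDRep_char]
    congr 1
    have : Multiplicative.toAdd (g ^ ((-1 : ZMod p).val)) =
        ((-1 : ZMod p).val : ZMod p) := by
      rw [hg]
      rw [toAdd_pow, toAdd_ofAdd, nsmul_eq_mul, mul_one]
    rw [this, ZMod.natCast_zmod_val]
  have hrhs : χ g = ζ ^ ((1 : ZMod p).val) := by
    rw [hχ, myFDRep_char, hg, toAdd_ofAdd]
  rw [hlhs, hrhs] at key
  have hvals : (-1 : ZMod p).val = (1 : ZMod p).val :=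
    hζ.pow_inj (ZMod.val_lt _) (ZMod.val_lt _) key
  have hneg : (-1 : ZMod p) = 1 := by
    calc (-1 : ZMod p) = (((-1 : ZMod p).val : ℕ) : ZMod p) :=
          (ZMod.natCast_zmod_val _).symm
      _ = (((1 : ZMod p).val : ℕ) : ZMod p) := by rw [hvals]
      _ = 1 := ZMod.natCast_zmod_val _
  have h2 : ((2 : ℕ) : ZMod p) = 0 := by
    push_cast
    linear_combination -hneg
  rw [ZMod.natCast_eq_zero_iff] at h2
  have := Nat.le_of_dvd (by norm_num) h2
  omega
end

section
/- Let G be a finite group. If for a subgroup H ≤ G×G the (G×G×G)-set induced from the subgroup H̄ = {(a,a,b) : (a,b) ∈ H} of G×G×G is isomorphic to a set induced from a subgroup of the form {(d,c,d) : (c,d) ∈ K} for some K ≤ G×G, then H is (G×G)-conjugate to a subgroup of Δ(G). -/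
/-- Let `G` be a finite group, `Δ(G) = {(g,g)} ≤ G×G` and, for `H ≤ G×G`, let
`H̄ = {(a,a,b) : (a,b) ∈ H} ≤ G×G×G`.  If some conjugate of `H̄` in `G×G×G` equals a subgroup
of the form `{(d,c,d) : (c,d) ∈ K}` for some `K ≤ G×G`, then `H` is `(G×G)`-conjugate to a
subgroup of the diagonal `Δ(G)`.  (This is the stabilizer constraint forced by the equality
of induced virtual `(G×G×G)`-sets `Ind_{Δ(G)×G}^{G×G×G}` vs `Ind_{D_{1,3}(G)}^{G×G×G}`.) -/
theorem conjugate_bar_subgroup_forces_diagonal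
    {G : Type} [Group G] [Fintype G] (H : Subgroup (G × G))
    (hyp : ∃ (K : Subgroup (G × G)) (x : G × G × G),
      Subgroup.map (MulAut.conj x).toMonoidHom
          (Subgroup.map ((MonoidHom.fst G G).prod (MonoidHom.id (G × G))) H)
        = Subgroup.map ((MonoidHom.snd G G).prod (MonoidHom.id (G × G))) K) :
    ∃ y : G × G,
      Subgroup.map (MulAut.conj y).toMonoidHom H
        ≤ ((MonoidHom.id G).prod (MonoidHom.id G)).range := by
  obtain ⟨K, x, hx⟩ := hyp
  refine ⟨(1, x.1⁻¹ * x.2.2), ?_⟩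
  rintro - ⟨⟨a, b⟩, hab, rfl⟩
  have hmem : (MulAut.conj x).toMonoidHom
      (((MonoidHom.fst G G).prod (MonoidHom.id (G × G))) (a, b)) ∈
      Subgroup.map ((MonoidHom.snd G G).prod (MonoidHom.id (G × G))) K := by
    rw [← hx]
    exact Subgroup.mem_map.mpr ⟨_, Subgroup.mem_map.mpr ⟨(a, b), hab, rfl⟩, rfl⟩
  obtain ⟨⟨c, d⟩, _, heq⟩ := hmem
  have h1 : x.1 * a * x.1⁻¹ = d := by
    have := congrArg Prod.fst heq
    simpa [MulAut.conj, Prod.mul_def] using this.symm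
  have h2 : x.2.2 * b * x.2.2⁻¹ = d := by
    have := congrArg (fun p => p.2.2) heq
    simpa [MulAut.conj, Prod.mul_def] using this.symm
  have h : x.1 * a * x.1⁻¹ = x.2.2 * b * x.2.2⁻¹ := h1.trans h2.symm
  refine ⟨x.1⁻¹ * (x.2.2 * b * x.2.2⁻¹) * x.1, ?_⟩
  have ha : a = x.1⁻¹ * (x.2.2 * b * x.2.2⁻¹) * x.1 := by rw [← h]; group
  have hb : (x.1⁻¹ * x.2.2) * b * (x.1⁻¹ * x.2.2)⁻¹
      = x.1⁻¹ * (x.2.2 * b * x.2.2⁻¹) * x.1 := by group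
  simp [MulAut.conj, Prod.mul_def, Prod.ext_iff, ← ha, ← hb]
  rw [ha]; group
end
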